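/- Let G be a bipartite graph, R a twin class of G with S = N(R), T the set of sisters of R, and W = N(S) \ (R ∪ T). Suppose |R| > |W| and T ≠ ∅. Let u ∈ T and let v be the unique vertex of N(u) \ S. Then for every integer k ≥ 1, G admits a biclustering of cost at most k if and only if G − uv admits a biclustering of cost at most k − 1. -/

import Mathlib

def BipartiteWith {V : Type*} (G : SimpleGraph V) (side : V → Bool) : Prop :=
  ∀ u v, G.Adj u v → side u ≠ side v

def BiclusterGraph {V : Type*} (G : SimpleGraph V) (side : V → Bool) : Prop :=
  ∀ u v, G.Reachable u v → side u ≠ side v → G.Adj u v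

def Biclustering {V : Type*} (B : SimpleGraph V) (side : V → Bool) : Prop :=
  BipartiteWith B side ∧ BiclusterGraph B side

/-- `t` is a sister of the twin class `R` with `S = N(R)`: it is a neighbor of `S`
outside `R`, it has no twin, and its neighborhood is `S` plus exactly one extra
vertex outside `S`. -/
def IsSisterOf {V : Type*} (G : SimpleGraph V) (side : V → Bool) (R S : Set V) (t : V) : Prop :=
  t ∈ (⋃ s ∈ S, G.neighborSet s) \ R ∧
  (∀ w, side w = side t → G.neighborSet w = G.neighborSet t → w = t) ∧
  (∃ v, v ∉ S ∧ G.neighborSet t = S ∪ {v})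

/-
The cost of a biclustering `B` splits as a sum, over the vertices `x` of one side, of
`|N_G(x) Δ N_B(x)|`, and a biclustering is the same as a choice of pairwise equal-or-disjoint
neighbourhoods for the vertices of that side. Given any `B`, let `x₀` be a vertex of `R` of least
cost `μ`. Give every vertex of `R ∪ T` the cluster `S`, and every other vertex the cheaper of `S`
and its old cluster minus `S`. Each vertex of `R` saves at least `μ`; each vertex of `W` loses at
most `μ`, its old cluster being that of `x₀` or disjoint from it; the sisters lose at most `μ`
altogether, since at most one of them was clustered exactly, and none if `S` itself was a
cluster; the remaining vertices have no neighbour in `S` and lose nothing. As `|W| < |R|`, the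
new biclustering is no worse and separates `u` from `v`, so deleting `uv` lowers the optimal
cost by one.
-/

open Finset

section Counting

variable {α : Type*}

theorem Set.ncard_symmDiff_le_add [Finite α] (A B C : Set α) :
    (symmDiff A C).ncard ≤ (symmDiff A B).ncard + (symmDiff B C).ncard :=
  (Set.ncard_le_ncard (symmDiff_triangle A B C)).trans (Set.ncard_union_le _ _)

theorem Set.ncard_symmDiff_le_ncard_symmDiff_sdiff_singleton_add_one [Finite α]
    (A C : Set α) (e : α) : (symmDiff A C).ncard ≤ (symmDiff (A \ {e}) C).ncard + 1 := by
  have hsub : symmDiff A (A \ {e}) ⊆ {e} := by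
    intro z
    simp only [Set.mem_symmDiff, Set.mem_sdiff, Set.mem_singleton_iff]
    tauto
  calc (symmDiff A C).ncard ≤ (symmDiff A (A \ {e})).ncard + (symmDiff (A \ {e}) C).ncard :=
        Set.ncard_symmDiff_le_add _ _ _
    _ ≤ 1 + (symmDiff (A \ {e}) C).ncard := by
        gcongr
        exact (Set.ncard_le_ncard hsub).trans (Set.ncard_singleton e).le
    _ = _ := add_comm _ _

theorem Set.ncard_symmDiff_sdiff_singleton_add_one [Finite α] {A C : Set α} {e : α}
    (heA : e ∈ A) (heC : e ∉ C) : (symmDiff (A \ {e}) C).ncard + 1 = (symmDiff A C).ncard := by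
  have h : symmDiff (A \ {e}) C = symmDiff A C \ {e} := by
    ext z
    by_cases hz : z = e
    · subst hz; simp [Set.mem_symmDiff, heC]
    · simp [Set.mem_symmDiff, hz]
  rw [h, Set.ncard_sdiff_singleton_add_one (Set.mem_symmDiff.2 (Or.inl ⟨heA, heC⟩))]

theorem Finset.card_le_sum_add_card_filter_eq_zero (s : Finset α) (f : α → ℕ) :
    #s ≤ ∑ x ∈ s, f x + #{x ∈ s | f x = 0} := by
  rw [card_eq_sum_ones, card_eq_sum_ones {x ∈ s | f x = 0}, sum_filter, ← sum_add_distrib]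
  exact sum_le_sum fun x _ => by split_ifs <;> omega

theorem Set.ncard_symmDiff_eq_zero [Finite α] {A C : Set α} :
    (symmDiff A C).ncard = 0 ↔ A = C := by
  rw [Set.ncard_eq_zero, Set.symmDiff_eq_empty]

theorem Set.min_ncard_symmDiff_le [Finite α] {A S Y Y₀ : Set α}
    (h : Y = Y₀ ∨ Disjoint Y Y₀) :
    min (symmDiff A S).ncard (symmDiff A (Y \ S)).ncard
      ≤ (symmDiff A Y).ncard + (symmDiff S Y₀).ncard := by
  rcases h with rfl | hd
  · exact (min_le_left _ _).trans
      ((Set.ncard_symmDiff_le_add A Y S).trans_eq (by rw [symmDiff_comm Y]))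
  refine (min_le_right _ _).trans ((Set.ncard_symmDiff_le_add A Y _).trans ?_)
  refine Nat.add_le_add_left (Set.ncard_le_ncard fun z hz => ?_) _
  have : z ∈ Y → z ∉ Y₀ := fun h => Set.disjoint_left.1 hd h
  simp only [Set.mem_symmDiff, Set.mem_sdiff] at hz ⊢
  tauto

theorem Set.ncard_symmDiff_sdiff_le_of_disjoint [Finite α] {A S : Set α} (h : Disjoint A S)
    (Y : Set α) : (symmDiff A (Y \ S)).ncard ≤ (symmDiff A Y).ncard := by
  refine Set.ncard_le_ncard fun z hz => ?_
  have : z ∈ A → z ∉ S := fun h' => Set.disjoint_left.1 h h'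
  simp only [Set.mem_symmDiff, Set.mem_sdiff] at hz ⊢
  tauto

theorem Finset.sum_le_sum_of_savings [DecidableEq α] {F R T W : Finset α} {c c' : α → ℕ}
    {μ : ℕ} (hRF : R ⊆ F) (hTF : T ⊆ F) (hRT : Disjoint R T) (hcard : #W < #R)
    (hR : ∀ x ∈ R, c' x + μ ≤ c x) (hT : ∑ t ∈ T, c' t ≤ ∑ t ∈ T, c t + μ)
    (hW : ∀ x ∈ F, x ∉ R → x ∉ T → c' x ≤ c x + μ)
    (hO : ∀ x ∈ F, x ∉ R → x ∉ T → x ∉ W → c' x ≤ c x) :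
    ∑ x ∈ F, c' x ≤ ∑ x ∈ F, c x := by
  have hrest : ∑ x ∈ F \ T, c' x + μ * #R ≤ ∑ x ∈ F \ T, c x + μ * #W := by
    have hR' : (F \ T) ∩ R = R := inter_eq_right.2 (subset_sdiff.2 ⟨hRF, hRT⟩)
    calc ∑ x ∈ F \ T, c' x + μ * #R = ∑ x ∈ F \ T, (c' x + if x ∈ R then μ else 0) := by
          rw [sum_add_distrib, sum_ite_mem, hR', sum_const, smul_eq_mul, mul_comm]
      _ ≤ ∑ x ∈ F \ T, (c x + if x ∈ W then μ else 0) := sum_le_sum fun x hx => by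
          obtain ⟨hxF, hxT⟩ := mem_sdiff.1 hx
          by_cases hxR : x ∈ R
          · have := hR x hxR
            split_ifs <;> omega
          by_cases hxW : x ∈ W
          · simpa [hxR, hxW] using hW x hxF hxR hxT
          · simpa [hxR, hxW] using hO x hxF hxR hxT hxW
      _ = ∑ x ∈ F \ T, c x + μ * #((F \ T) ∩ W) := by
          rw [sum_add_distrib, sum_ite_mem, sum_const, smul_eq_mul, mul_comm]
      _ ≤ ∑ x ∈ F \ T, c x + μ * #W := by grw [inter_subset_right]
  have hμ : μ * #W + μ ≤ μ * #R := by
    rw [← mul_add_one]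
    exact Nat.mul_le_mul_left μ hcard
  rw [← sum_sdiff hTF, ← sum_sdiff (f := c) hTF]
  omega

end Counting

section Bipartite

theorem Bool.eq_of_ne_of_ne {a b c : Bool} (ha : a ≠ c) (hb : b ≠ c) : a = b := by
  decide +revert

variable {V : Type*} {side : V → Bool}

theorem SimpleGraph.edgeSet_symmDiff (G H : SimpleGraph V) :
    (symmDiff G H).edgeSet = symmDiff G.edgeSet H.edgeSet := by
  simp [symmDiff_def, SimpleGraph.edgeSet_sup, SimpleGraph.edgeSet_sdiff]

theorem SimpleGraph.neighborSet_symmDiff (G H : SimpleGraph V) (x : V) :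
    (symmDiff G H).neighborSet x = symmDiff (G.neighborSet x) (H.neighborSet x) := by
  ext y
  simp [symmDiff_def]

theorem bipartiteWith_symmDiff {G H : SimpleGraph V} (hG : BipartiteWith G side)
    (hH : BipartiteWith H side) : BipartiteWith (symmDiff G H) side := by
  intro x y hxy
  simp only [symmDiff_def, SimpleGraph.sup_adj, SimpleGraph.sdiff_adj] at hxy
  rcases hxy with ⟨h, -⟩ | ⟨h, -⟩
  exacts [hG x y h, hH x y h]

theorem BipartiteWith.ncard_edgeSet_eq_sum [Fintype V] {H : SimpleGraph V}
    (hH : BipartiteWith H side) (b : Bool) :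
    H.edgeSet.ncard = ∑ x with side x = b, (H.neighborSet x).ncard := by
  classical
  have hHb :
      H.IsBipartiteWith ↑({x | side x = b} : Finset V) ↑({x | side x ≠ b} : Finset V) :=
    { disjoint := by
        rw [Finset.disjoint_coe, Finset.disjoint_filter]
        exact fun _ _ h => not_not.2 h
      mem_of_adj := fun x y hxy => by
        have := hH x y hxy
        simp only [coe_filter, mem_univ, true_and, Set.mem_ofPred_eq]
        cases hx : side x <;> cases hy : side y <;> cases b <;> simp_all }
  rw [← SimpleGraph.coe_edgeFinset, Set.ncard_coe_finset,
    ← SimpleGraph.isBipartiteWith_sum_degrees_eq_card_edges hHb]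
  refine sum_congr rfl fun x _ => ?_
  rw [← SimpleGraph.card_neighborSet_eq_degree, ← Nat.card_eq_fintype_card, Nat.card_coe_set_eq]

theorem BipartiteWith.ncard_symmDiff_edgeSet_eq_sum [Fintype V] {G H : SimpleGraph V}
    (hG : BipartiteWith G side) (hH : BipartiteWith H side) (b : Bool) :
    (symmDiff G.edgeSet H.edgeSet).ncard
      = ∑ x with side x = b, (symmDiff (G.neighborSet x) (H.neighborSet x)).ncard := by
  simp_rw [← SimpleGraph.edgeSet_symmDiff, ← SimpleGraph.neighborSet_symmDiff]
  exact (bipartiteWith_symmDiff hG hH).ncard_edgeSet_eq_sum b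

end Bipartite

section Biclustering

variable {V : Type*} {side : V → Bool}

theorem Biclustering.neighborSet_eq_or_disjoint {B : SimpleGraph V} (hB : Biclustering B side)
    {x x' : V} (hxx' : side x = side x') :
    B.neighborSet x = B.neighborSet x' ∨ Disjoint (B.neighborSet x) (B.neighborSet x') := by
  refine or_iff_not_imp_right.2 fun hnd => ?_
  obtain ⟨y, hy, hy'⟩ := Set.not_disjoint_iff.1 hnd
  have key : ∀ {p p'}, side p = side p' → B.Adj p y → B.Adj p' y →
      B.neighborSet p ⊆ B.neighborSet p' := fun hpp' hp hp' z hz =>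
    hB.2 _ _ ((hp'.reachable.trans hp.reachable.symm).trans hz.reachable) (hpp' ▸ hB.1 _ _ hz)
  exact (key hxx' hy hy').antisymm (key hxx'.symm hy' hy)

def graphOfNeighborSets (side : V → Bool) (b : Bool) (g : V → Set V) : SimpleGraph V :=
  SimpleGraph.fromRel fun x y => side x = b ∧ y ∈ g x

variable {b : Bool} {g : V → Set V}

theorem neighborSet_graphOfNeighborSets (hg : ∀ x, side x = b → ∀ y ∈ g x, side y ≠ b)
    {x : V} (hx : side x = b) : (graphOfNeighborSets side b g).neighborSet x = g x := by
  ext y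
  simp only [graphOfNeighborSets, SimpleGraph.mem_neighborSet, SimpleGraph.fromRel_adj]
  constructor
  · rintro ⟨-, ⟨-, hy⟩ | ⟨hy, hxy⟩⟩
    exacts [hy, absurd hx (hg y hy x hxy)]
  · intro hy
    exact ⟨fun h => hg x hx y hy (h ▸ hx), Or.inl ⟨hx, hy⟩⟩

theorem biclustering_graphOfNeighborSets (hg : ∀ x, side x = b → ∀ y ∈ g x, side y ≠ b)
    (hlam : ∀ x x', side x = b → side x' = b → g x = g x' ∨ Disjoint (g x) (g x')) :
    Biclustering (graphOfNeighborSets side b g) side := by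
  set K := graphOfNeighborSets side b g
  have hbip : BipartiteWith K side := by
    rintro x y ⟨-, ⟨hx, hy⟩ | ⟨hy, hx⟩⟩
    · exact fun h => hg x hx y hy (h ▸ hx)
    · exact fun h => hg y hy x hx (h.symm ▸ hy)
  have hadj : ∀ {x y}, side x = b → (K.Adj x y ↔ y ∈ g x) := fun hx => by
    rw [← SimpleGraph.mem_neighborSet, neighborSet_graphOfNeighborSets hg hx]
  have hblock : ∀ {p q}, side p = b → K.Reachable p q →
      (side q = b ∧ g q = g p) ∨ (side q ≠ b ∧ q ∈ g p) := by
    intro p q hp hpq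
    rw [SimpleGraph.reachable_iff_reflTransGen] at hpq
    induction hpq with
    | refl => exact Or.inl ⟨hp, rfl⟩
    | @tail q r _ hqr ih =>
      rcases ih with ⟨hq, hgq⟩ | ⟨hq, hqp⟩
      · have hr := (hadj hq).1 hqr
        exact Or.inr ⟨hg q hq r hr, hgq ▸ hr⟩
      · have hr : side r = b := Bool.eq_of_ne_of_ne (hbip q r hqr).symm (Ne.symm hq)
        have hqr' := (hadj hr).1 hqr.symm
        exact Or.inl ⟨hr, (hlam r p hr hp).resolve_right
          fun hd => Set.disjoint_left.1 hd hqr' hqp⟩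
  refine ⟨hbip, fun p q hpq hne => ?_⟩
  by_cases hp : side p = b
  · rcases hblock hp hpq with ⟨hq, -⟩ | ⟨-, hq⟩
    exacts [absurd (hp.trans hq.symm) hne, (hadj hp).2 hq]
  · have hq : side q = b := Bool.eq_of_ne_of_ne hne.symm (Ne.symm hp)
    rcases hblock hq hpq.symm with ⟨hp', -⟩ | ⟨-, hp'⟩
    exacts [absurd hp' hp, ((hadj hq).2 hp').symm]

end Biclustering

section Merge

variable {V : Type*} [DecidableEq V] {G B : SimpleGraph V} {side : V → Bool} {b : Bool}
  {S : Set V}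

def mergedNeighborSet (G B : SimpleGraph V) (S : Set V) (M : Finset V) (x : V) : Set V :=
  if x ∈ M then S
  else if (symmDiff (G.neighborSet x) S).ncard
      ≤ (symmDiff (G.neighborSet x) (B.neighborSet x \ S)).ncard then S
  else B.neighborSet x \ S

theorem mergedNeighborSet_of_mem {M : Finset V} {x : V} (hx : x ∈ M) :
    mergedNeighborSet G B S M x = S :=
  if_pos hx

theorem mergedNeighborSet_eq_or (M : Finset V) (x : V) :
    mergedNeighborSet G B S M x = S ∨ mergedNeighborSet G B S M x = B.neighborSet x \ S := by
  unfold mergedNeighborSet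
  split_ifs <;> simp

theorem ncard_symmDiff_mergedNeighborSet_of_notMem {M : Finset V} {x : V} (hx : x ∉ M) :
    (symmDiff (G.neighborSet x) (mergedNeighborSet G B S M x)).ncard
      = min (symmDiff (G.neighborSet x) S).ncard
          (symmDiff (G.neighborSet x) (B.neighborSet x \ S)).ncard := by
  unfold mergedNeighborSet
  rw [if_neg hx]
  split_ifs with h
  · exact (min_eq_left h).symm
  · exact (min_eq_right (le_of_not_ge h)).symm

theorem side_ne_of_mem_mergedNeighborSet (hB : Biclustering B side) (hS : ∀ y ∈ S, side y ≠ b)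
    (M : Finset V) {x y : V} (hx : side x = b) (hy : y ∈ mergedNeighborSet G B S M x) :
    side y ≠ b := by
  rcases mergedNeighborSet_eq_or (G := G) (B := B) (S := S) M x with h | h <;> rw [h] at hy
  · exact hS y hy
  · exact hx ▸ (hB.1 x y hy.1).symm

theorem neighborSet_graphOfNeighborSets_mergedNeighborSet (hB : Biclustering B side)
    (hS : ∀ y ∈ S, side y ≠ b) (M : Finset V) {x : V} (hx : side x = b) :
    (graphOfNeighborSets side b (mergedNeighborSet G B S M)).neighborSet x
      = mergedNeighborSet G B S M x :=
  neighborSet_graphOfNeighborSets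
    (fun _ hx' _ hy => side_ne_of_mem_mergedNeighborSet hB hS M hx' hy) hx

theorem biclustering_graphOfNeighborSets_mergedNeighborSet (hB : Biclustering B side)
    (hS : ∀ y ∈ S, side y ≠ b) (M : Finset V) :
    Biclustering (graphOfNeighborSets side b (mergedNeighborSet G B S M)) side := by
  refine biclustering_graphOfNeighborSets
    (fun x hx y hy => side_ne_of_mem_mergedNeighborSet hB hS M hx hy) fun x x' hx hx' => ?_
  rcases mergedNeighborSet_eq_or (G := G) (B := B) (S := S) M x with h | h <;>
    rcases mergedNeighborSet_eq_or (G := G) (B := B) (S := S) M x' with h' | h' <;> rw [h, h']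
  · exact Or.inl rfl
  · exact Or.inr disjoint_sdiff_self_right
  · exact Or.inr disjoint_sdiff_self_left
  · exact (hB.neighborSet_eq_or_disjoint (hx.trans hx'.symm)).imp (congrArg (· \ S))
      (Disjoint.mono sdiff_le sdiff_le)

end Merge

section Exchange

variable {V : Type*} [Fintype V] {G B : SimpleGraph V} {side : V → Bool} {b : Bool}
  {S : Set V}

theorem card_le_sum_ncard_symmDiff_add {T : Finset V} (hB : Biclustering B side)
    (hTb : ∀ t ∈ T, side t = b) (hTS : ∀ t ∈ T, ∃ v ∉ S, G.neighborSet t = S ∪ {v})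
    (hTinj : Set.InjOn G.neighborSet T) (hS : S.Nonempty) {x₀ : V} (hx₀ : side x₀ = b) :
    #T ≤ ∑ t ∈ T, (symmDiff (G.neighborSet t) (B.neighborSet t)).ncard
      + (symmDiff S (B.neighborSet x₀)).ncard := by
  refine (card_le_sum_add_card_filter_eq_zero T _).trans (Nat.add_le_add_left ?_ _)
  have hcluster : ∀ t ∈ T, (symmDiff (G.neighborSet t) (B.neighborSet t)).ncard = 0 →
      ∀ y, side y = b → S ⊆ B.neighborSet y → B.neighborSet y = G.neighborSet t := by
    intro t ht h0 y hy hSy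
    rw [Set.ncard_symmDiff_eq_zero] at h0
    obtain ⟨s, hs⟩ := hS
    obtain ⟨v, -, hv⟩ := hTS t ht
    refine h0 ▸ (hB.neighborSet_eq_or_disjoint (hy.trans (hTb t ht).symm)).resolve_right
      fun hd => Set.disjoint_left.1 hd (hSy hs) ?_
    rw [← h0, hv]
    exact Or.inl hs
  rcases Nat.eq_zero_or_pos (symmDiff S (B.neighborSet x₀)).ncard with h0 | hpos
  · have hSx₀ := Set.ncard_symmDiff_eq_zero.1 h0
    rw [h0, nonpos_iff_eq_zero, card_eq_zero, filter_eq_empty_iff]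
    intro t ht ht0
    obtain ⟨v, hvS, hv⟩ := hTS t ht
    have hSv := hcluster t ht ht0 x₀ hx₀ hSx₀.le
    rw [← hSx₀, hv] at hSv
    exact hvS (hSv ▸ Or.inr rfl)
  · refine (card_le_one.2 fun t ht t' ht' => ?_).trans hpos
    rw [mem_filter] at ht ht'
    obtain ⟨v, -, hv⟩ := hTS t' ht'.1
    have hNt' := (Set.ncard_symmDiff_eq_zero.1 ht'.2).symm
    exact hTinj ht.1 ht'.1 ((hcluster t ht.1 ht.2 t' (hTb t' ht'.1)
      (hNt' ▸ hv ▸ Set.subset_union_left)).symm.trans hNt')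

variable [DecidableEq V]

theorem exists_biclustering_le_neighborSet_eq {R T W : Finset V}
    (hG : BipartiteWith G side) (hB : Biclustering B side)
    (hRb : ∀ x ∈ R, side x = b) (hRS : ∀ x ∈ R, G.neighborSet x = S)
    (hTb : ∀ t ∈ T, side t = b) (hTS : ∀ t ∈ T, ∃ v ∉ S, G.neighborSet t = S ∪ {v})
    (hTinj : Set.InjOn G.neighborSet T) (hS : S.Nonempty)
    (hW : ∀ x, side x = b → x ∉ R → x ∉ T → x ∉ W → Disjoint (G.neighborSet x) S)
    (hcard : #W < #R) :
    ∃ B' : SimpleGraph V, Biclustering B' side ∧ (∀ t ∈ T, B'.neighborSet t = S) ∧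
      (symmDiff G.edgeSet B'.edgeSet).ncard ≤ (symmDiff G.edgeSet B.edgeSet).ncard := by
  set c : V → ℕ := fun x => (symmDiff (G.neighborSet x) (B.neighborSet x)).ncard
  obtain ⟨x₀, hx₀R, hx₀min⟩ := R.exists_min_image c (card_pos.1 (Nat.zero_lt_of_lt hcard))
  have hx₀ : side x₀ = b := hRb x₀ hx₀R
  have hμ : c x₀ = (symmDiff S (B.neighborSet x₀)).ncard := by simp only [c, hRS x₀ hx₀R]
  have hSside : ∀ y ∈ S, side y ≠ b := fun y hy => by
    rw [← hRS x₀ hx₀R] at hy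
    exact hx₀ ▸ (hG x₀ y hy).symm
  set g := mergedNeighborSet G B S (R ∪ T) with hg
  set B' := graphOfNeighborSets side b g
  have hNB' : ∀ x, side x = b → B'.neighborSet x = g x := fun x hx =>
    neighborSet_graphOfNeighborSets_mergedNeighborSet hB hSside _ hx
  have hB' : Biclustering B' side := biclustering_graphOfNeighborSets_mergedNeighborSet hB hSside _
  refine ⟨B', hB', fun t ht => (hNB' t (hTb t ht)).trans
    (mergedNeighborSet_of_mem (mem_union_right R ht)), ?_⟩
  rw [hG.ncard_symmDiff_edgeSet_eq_sum hB'.1 b, hG.ncard_symmDiff_edgeSet_eq_sum hB.1 b,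
    sum_congr rfl fun x hx => by rw [hNB' x (mem_filter.1 hx).2]]
  have hTone : ∀ t ∈ T, (symmDiff (G.neighborSet t) (g t)).ncard ≤ 1 := by
    intro t ht
    obtain ⟨v, -, hv⟩ := hTS t ht
    rw [hv, hg, mergedNeighborSet_of_mem (mem_union_right R ht)]
    refine (Set.ncard_le_ncard (t := {v}) fun z hz => ?_).trans (Set.ncard_singleton v).le
    simp only [Set.mem_symmDiff, Set.mem_union] at hz
    tauto
  refine sum_le_sum_of_savings (R := R) (T := T) (W := W) (μ := c x₀)
    (fun x hx => mem_filter.2 ⟨mem_univ x, hRb x hx⟩)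
    (fun t ht => mem_filter.2 ⟨mem_univ t, hTb t ht⟩) ?_ hcard (fun x hx => ?_) ?_
    (fun x hx hxR hxT => ?_) (fun x hx hxR hxT hxW => ?_)
  · refine disjoint_left.2 fun x hxR hxT => ?_
    obtain ⟨v, hvS, hv⟩ := hTS x hxT
    exact hvS (hRS x hxR ▸ hv ▸ Or.inr rfl)
  · rw [hg, mergedNeighborSet_of_mem (mem_union_left T hx), ← hRS x hx, symmDiff_self,
      Set.bot_eq_empty, Set.ncard_empty, zero_add]
    exact hx₀min x hx
  · calc ∑ t ∈ T, (symmDiff (G.neighborSet t) (g t)).ncard ≤ #T := by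
          simpa using sum_le_card_nsmul T _ 1 hTone
      _ ≤ ∑ t ∈ T, c t + c x₀ :=
          hμ ▸ card_le_sum_ncard_symmDiff_add hB hTb hTS hTinj hS hx₀
  · rw [hg, ncard_symmDiff_mergedNeighborSet_of_notMem (by simp [hxR, hxT]), hμ]
    exact Set.min_ncard_symmDiff_le
      (hB.neighborSet_eq_or_disjoint ((mem_filter.1 hx).2.trans hx₀.symm))
  · rw [hg, ncard_symmDiff_mergedNeighborSet_of_notMem (by simp [hxR, hxT])]
    exact (min_le_right _ _).trans
      (Set.ncard_symmDiff_sdiff_le_of_disjoint (hW x (mem_filter.1 hx).2 hxR hxT hxW) _)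

end Exchange

theorem exists_biclustering_le_neighborSet_sister_eq {V : Type*} [Fintype V]
    {G B : SimpleGraph V} {side : V → Bool} (hG : BipartiteWith G side) (hB : Biclustering B side)
    {r : V} {R S T W : Set V}
    (hR : R = {w | side w = side r ∧ G.neighborSet w = G.neighborSet r})
    (hS : S = ⋃ x ∈ R, G.neighborSet x)
    (hT : T = {t | IsSisterOf G side R S t})
    (hW : W = (⋃ s ∈ S, G.neighborSet s) \ (R ∪ T))
    (hcard : W.ncard < R.ncard) (hTne : T.Nonempty) :
    ∃ B' : SimpleGraph V, Biclustering B' side ∧ (∀ t ∈ T, B'.neighborSet t = S) ∧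
      (symmDiff G.edgeSet B'.edgeSet).ncard ≤ (symmDiff G.edgeSet B.edgeSet).ncard := by
  classical
  have hRS : ∀ x ∈ R, G.neighborSet x = S := by
    intro x hx
    rw [hR] at hx
    rw [hx.2, hS, hR]
    ext y
    simp only [Set.mem_iUnion, Set.mem_ofPred_eq, exists_prop]
    exact ⟨fun hy => ⟨r, ⟨rfl, rfl⟩, hy⟩, fun ⟨x', ⟨_, hx'⟩, hy⟩ => hx' ▸ hy⟩
  have hrR : r ∈ R := hR ▸ ⟨rfl, rfl⟩
  have hside : ∀ x ∈ ⋃ s ∈ S, G.neighborSet s, side x = side r := by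
    simp only [Set.mem_iUnion, exists_prop]
    rintro x ⟨s, hs, hsx⟩
    rw [← hRS r hrR] at hs
    exact Bool.eq_of_ne_of_ne (hG s x hsx).symm (hG r s hs)
  have hsis : ∀ t ∈ T, IsSisterOf G side R S t := fun t ht => by rwa [hT] at ht
  have hTside : ∀ t ∈ T, side t = side r := fun t ht => hside t (hsis t ht).1.1
  have hTinj : Set.InjOn G.neighborSet T := fun t ht t' ht' hN =>
    ((hsis t ht).2.1 t' ((hTside t' ht').trans (hTside t ht).symm) hN.symm).symm
  have hWS : ∀ x, x ∉ R → x ∉ T → x ∉ W → Disjoint (G.neighborSet x) S := by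
    intro x hxR hxT hxW
    refine Set.disjoint_left.2 fun y hxy hyS => hxW ?_
    rw [hW]
    exact ⟨Set.mem_iUnion₂.2 ⟨y, hyS, G.adj_symm hxy⟩,
      by rintro (h | h) <;> contradiction⟩
  obtain ⟨u, hu⟩ := hTne
  obtain ⟨s, hs, -⟩ := Set.mem_iUnion₂.1 (hsis u hu).1.1
  obtain ⟨B', hB', hB'T, hle⟩ := exists_biclustering_le_neighborSet_eq (b := side r)
    (R := R.toFinset) (T := T.toFinset) (W := W.toFinset) hG hB
    (fun x hx => by rw [Set.mem_toFinset, hR] at hx; exact hx.1) (by simpa using hRS)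
    (by simpa using hTside) (by simpa using fun t ht => (hsis t ht).2.2) (by simpa using hTinj)
    ⟨s, hs⟩ (by simpa using fun x _ => hWS x)
    (by simpa [Set.ncard_eq_toFinset_card'] using hcard)
  exact ⟨B', hB', fun t ht => hB'T t (Set.mem_toFinset.2 ht), hle⟩

theorem stmt_5_general {V : Type*} [Fintype V]
    (G : SimpleGraph V) (side : V → Bool) (hG : BipartiteWith G side)
    (r : V) (R S T W : Set V)
    (hR : R = {w | side w = side r ∧ G.neighborSet w = G.neighborSet r})
    (hS : S = ⋃ x ∈ R, G.neighborSet x)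
    (hT : T = {t | IsSisterOf G side R S t})
    (hW : W = (⋃ s ∈ S, G.neighborSet s) \ (R ∪ T))
    (hcard : W.ncard < R.ncard)
    (u : V) (hu : u ∈ T)
    (v : V) (hv : v ∉ S) (huv : G.neighborSet u = S ∪ {v})
    (k : ℕ) (hk : 1 ≤ k) :
    (∃ B : SimpleGraph V, Biclustering B side ∧
        (symmDiff G.edgeSet B.edgeSet).ncard ≤ k) ↔
    (∃ B : SimpleGraph V, Biclustering B side ∧
        (symmDiff (G.deleteEdges {s(u, v)}).edgeSet B.edgeSet).ncard ≤ k - 1) := by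
  have huvG : s(u, v) ∈ G.edgeSet := show v ∈ G.neighborSet u from huv ▸ Or.inr rfl
  rw [SimpleGraph.edgeSet_deleteEdges]
  constructor
  · rintro ⟨B, hB, hcost⟩
    obtain ⟨B', hB', hB'T, hle⟩ :=
      exists_biclustering_le_neighborSet_sister_eq hG hB hR hS hT hW hcard ⟨u, hu⟩
    have huvB' : s(u, v) ∉ B'.edgeSet := show v ∉ B'.neighborSet u from hB'T u hu ▸ hv
    refine ⟨B', hB', ?_⟩
    have := Set.ncard_symmDiff_sdiff_singleton_add_one huvG huvB'
    omega
  · rintro ⟨B, hB, hcost⟩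
    refine ⟨B, hB, ?_⟩
    have := Set.ncard_symmDiff_le_ncard_symmDiff_sdiff_singleton_add_one G.edgeSet B.edgeSet s(u, v)
    omega

theorem stmt_5 {V : Type*} [Fintype V] [DecidableEq V]
    (G : SimpleGraph V) (side : V → Bool) (hG : BipartiteWith G side)
    (r : V) (R S T W : Set V)
    (hR : R = {w | side w = side r ∧ G.neighborSet w = G.neighborSet r})
    (hS : S = ⋃ x ∈ R, G.neighborSet x)
    (hT : T = {t | IsSisterOf G side R S t})
    (hW : W = (⋃ s ∈ S, G.neighborSet s) \ (R ∪ T))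
    (hcard : W.ncard < R.ncard)
    (u : V) (hu : u ∈ T)
    (v : V) (hv : v ∉ S) (huv : G.neighborSet u = S ∪ {v})
    (k : ℕ) (hk : 1 ≤ k) :
    (∃ B : SimpleGraph V, Biclustering B side ∧
        (symmDiff G.edgeSet B.edgeSet).ncard ≤ k) ↔
    (∃ B : SimpleGraph V, Biclustering B side ∧
        (symmDiff (G.deleteEdges {s(u, v)}).edgeSet B.edgeSet).ncard ≤ k - 1) :=
  stmt_5_general G side hG r R S T W hR hS hT hW hcard u hu v hv huv k hk
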